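/- arXiv:1809.00819 — 6 statements merged into one kernel-verified Lean document; each statement's English description precedes it below -/
import Mathlib

section
/- For all real numbers a and b, a² + (1/2)(a+b)² ≥ (1 − 1/√2)(a² + b²). -/
/-- For all real numbers `a` and `b`, `a² + (1/2)(a+b)² ≥ (1 − 1/√2)(a² + b²)`. -/
theorem core_algebraic_inequality (a b : ℝ) :
    a ^ 2 + (1 / 2) * (a + b) ^ 2 ≥ (1 - 1 / Real.sqrt 2) * (a ^ 2 + b ^ 2) := by
  have h2 : Real.sqrt 2 ^ 2 = 2 := Real.sq_sqrt (by norm_num)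
  have h1 : Real.sqrt 2 ≥ 1 := by
    nlinarith [Real.sqrt_nonneg 2]
  have hpos : Real.sqrt 2 > 0 := by linarith
  have hinv : (1 : ℝ) / Real.sqrt 2 = Real.sqrt 2 / 2 := by
    rw [div_eq_div_iff (ne_of_gt hpos) (by norm_num : (2:ℝ) ≠ 0)]
    nlinarith
  rw [hinv]
  nlinarith [mul_nonneg (by linarith : Real.sqrt 2 - 1 ≥ 0) (sq_nonneg ((Real.sqrt 2 + 1) * a + b))]
end

section
/- For all real numbers A₁₁, A₁₂, A₂₂, B₁₁, B₁₂, B₂₂ (representing the entries of the symmetric Hessians A = ∇²v₁ and B = ∇²v₂ of a planar vector field v = (v₁,v₂)), one has A₁₁² + A₁₂² + B₁₂² + B₂₂² + (1/2)(A₁₂ + B₁₁)² + (1/2)(B₁₂ + A₂₂)² ≥ (1 − 1/√2)(A₁₁² + A₁₂² + A₂₂² + B₁₁² + B₁₂² + B₂₂²). In particular, for any twice differentiable vector field v = (v₁,v₂) : ℝ² → ℝ², at every point |∇ε(v)|² ≥ (1 − 1/√2)|∇²v|². -/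
/-- First partial derivative `∂₁ f` of `f : ℝ² → ℝ`. -/
noncomputable def pd1 (f : ℝ × ℝ → ℝ) : ℝ × ℝ → ℝ := fun x => fderiv ℝ f x (1, 0)

/-- Second partial derivative `∂₂ f` of `f : ℝ² → ℝ`. -/
noncomputable def pd2 (f : ℝ × ℝ → ℝ) : ℝ × ℝ → ℝ := fun x => fderiv ℝ f x (0, 1)

/-- Squared Frobenius norm of the strain gradient `|∇ε(v)|²` of `v = (v₁, v₂)`:
`|∂₁₁v₁|² + |∂₁₂v₁|² + |∂₁₂v₂|² + |∂₂₂v₂|²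
  + (1/2)|∂₁₂v₁ + ∂₁₁v₂|² + (1/2)|∂₁₂v₂ + ∂₂₂v₁|²`. -/
noncomputable def gradEpsSq (v1 v2 : ℝ × ℝ → ℝ) (x : ℝ × ℝ) : ℝ :=
  (pd1 (pd1 v1) x) ^ 2 + (pd1 (pd2 v1) x) ^ 2 + (pd1 (pd2 v2) x) ^ 2 + (pd2 (pd2 v2) x) ^ 2
    + (1 / 2) * (pd1 (pd2 v1) x + pd1 (pd1 v2) x) ^ 2
    + (1 / 2) * (pd1 (pd2 v2) x + pd2 (pd2 v1) x) ^ 2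

/-- Squared Hessian norm `|∇²v|²` of `v = (v₁, v₂)`, each distinct second derivative
counted once: `Σ_{i=1,2} (|∂₁₁v_i|² + |∂₁₂v_i|² + |∂₂₂v_i|²)`. -/
noncomputable def hessSq (v1 v2 : ℝ × ℝ → ℝ) (x : ℝ × ℝ) : ℝ :=
  (pd1 (pd1 v1) x) ^ 2 + (pd1 (pd2 v1) x) ^ 2 + (pd2 (pd2 v1) x) ^ 2
    + (pd1 (pd1 v2) x) ^ 2 + (pd1 (pd2 v2) x) ^ 2 + (pd2 (pd2 v2) x) ^ 2

lemma korn_alg (A11 A12 A22 B11 B12 B22 : ℝ) :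
    A11 ^ 2 + A12 ^ 2 + B12 ^ 2 + B22 ^ 2
        + (1 / 2) * (A12 + B11) ^ 2 + (1 / 2) * (B12 + A22) ^ 2
      ≥ (1 - 1 / Real.sqrt 2)
          * (A11 ^ 2 + A12 ^ 2 + A22 ^ 2 + B11 ^ 2 + B12 ^ 2 + B22 ^ 2) := by
  have hs : Real.sqrt 2 ^ 2 = 2 := Real.sq_sqrt (by norm_num)
  have hs1 : (1:ℝ) ≤ Real.sqrt 2 := by
    nlinarith [Real.sqrt_nonneg 2]
  have hs2 : Real.sqrt 2 ≤ 2 := by nlinarith [Real.sqrt_nonneg 2]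
  have hinv : 1 / Real.sqrt 2 = Real.sqrt 2 / 2 := by
    rw [div_eq_div_iff (by positivity) (by norm_num : (2:ℝ) ≠ 0)]
    nlinarith
  rw [hinv]
  set s := Real.sqrt 2
  nlinarith [sq_nonneg ((1 + s) * A12 + B11), sq_nonneg ((1 + s) * B12 + A22),
    sq_nonneg A11, sq_nonneg B22, sq_nonneg (A12 + B11), sq_nonneg (B12 + A22)]

/-- For all real numbers `A₁₁, A₁₂, A₂₂, B₁₁, B₁₂, B₂₂` (the entries of the
symmetric Hessians `A = ∇²v₁` and `B = ∇²v₂`),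
`A₁₁² + A₁₂² + B₁₂² + B₂₂² + (1/2)(A₁₂ + B₁₁)² + (1/2)(B₁₂ + A₂₂)²
  ≥ (1 − 1/√2)(A₁₁² + A₁₂² + A₂₂² + B₁₁² + B₁₂² + B₂₂²)`.
In particular, for any twice differentiable vector field `v = (v₁, v₂) : ℝ² → ℝ²`,
at every point `|∇ε(v)|² ≥ (1 − 1/√2) |∇²v|²`. -/
theorem pointwise_strain_gradient_korn :
    (∀ A11 A12 A22 B11 B12 B22 : ℝ,
      A11 ^ 2 + A12 ^ 2 + B12 ^ 2 + B22 ^ 2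
          + (1 / 2) * (A12 + B11) ^ 2 + (1 / 2) * (B12 + A22) ^ 2
        ≥ (1 - 1 / Real.sqrt 2)
            * (A11 ^ 2 + A12 ^ 2 + A22 ^ 2 + B11 ^ 2 + B12 ^ 2 + B22 ^ 2)) ∧
    (∀ v1 v2 : ℝ × ℝ → ℝ, ContDiff ℝ 2 v1 → ContDiff ℝ 2 v2 →
      ∀ x : ℝ × ℝ, gradEpsSq v1 v2 x ≥ (1 - 1 / Real.sqrt 2) * hessSq v1 v2 x) := by
  refine ⟨korn_alg, fun v1 v2 _ _ x => ?_⟩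
  unfold gradEpsSq hessSq
  have := korn_alg (pd1 (pd1 v1) x) (pd1 (pd2 v1) x) (pd2 (pd2 v1) x)
    (pd1 (pd1 v2) x) (pd1 (pd2 v2) x) (pd2 (pd2 v2) x)
  linarith
end

section
/- Let Ω ⊆ ℝ² be an open set and let v = (v₁,v₂) : ℝ² → ℝ² be twice continuously differentiable. Then ∫_Ω |∇ε(v)(x)|² dx ≥ (1 − 1/√2) ∫_Ω |∇²v(x)|² dx, as an inequality of (possibly infinite) Lebesgue integrals of nonnegative continuous functions. -/
open MeasureTheory

lemma korn_key (s b d : ℝ) (hs : s ^ 2 = 2) (hs0 : 0 < s) :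
    (1 - 1 / s) * (b ^ 2 + d ^ 2) ≤ b ^ 2 + (1 / 2) * (b + d) ^ 2 := by
  have h1 : (1 : ℝ) / s = s / 2 := by
    field_simp
    nlinarith
  rw [h1]
  nlinarith [sq_nonneg ((s + 2) * b + s * d), hs0.le]

lemma korn_pointwise (v1 v2 : ℝ × ℝ → ℝ) (x : ℝ × ℝ) :
    (1 - 1 / Real.sqrt 2) * hessSq v1 v2 x ≤ gradEpsSq v1 v2 x := by
  have hs : (Real.sqrt 2) ^ 2 = 2 := Real.sq_sqrt (by norm_num)
  have hs0 : 0 < Real.sqrt 2 := by positivity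
  have k1 := korn_key _ (pd1 (pd2 v1) x) (pd1 (pd1 v2) x) hs hs0
  have k2 := korn_key _ (pd1 (pd2 v2) x) (pd2 (pd2 v1) x) hs hs0
  have h1 : 0 ≤ (1 / Real.sqrt 2) * (pd1 (pd1 v1) x) ^ 2 := by positivity
  have h2 : 0 ≤ (1 / Real.sqrt 2) * (pd2 (pd2 v2) x) ^ 2 := by positivity
  unfold gradEpsSq hessSq
  nlinarith [k1, k2, h1, h2]

/-- Let `Ω ⊆ ℝ²` be open and `v = (v₁,v₂) : ℝ² → ℝ²` twice continuously differentiable.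
Then `∫_Ω |∇ε(v)|² dx ≥ (1 − 1/√2) ∫_Ω |∇²v|² dx`, as an inequality of (possibly
infinite) Lebesgue integrals of nonnegative continuous functions. -/
theorem integrated_strain_gradient_korn (Ω : Set (ℝ × ℝ)) (hΩ : IsOpen Ω)
    (v1 v2 : ℝ × ℝ → ℝ) (h1 : ContDiff ℝ 2 v1) (h2 : ContDiff ℝ 2 v2) :
    ∫⁻ x in Ω, ENNReal.ofReal (gradEpsSq v1 v2 x) ≥
      ENNReal.ofReal (1 - 1 / Real.sqrt 2) * ∫⁻ x in Ω, ENNReal.ofReal (hessSq v1 v2 x) := by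
  have hlam0 : 0 ≤ 1 - 1 / Real.sqrt 2 := by
    have h1 : (1 : ℝ) ≤ Real.sqrt 2 := by
      rw [show (1 : ℝ) = Real.sqrt 1 from Real.sqrt_one.symm]
      exact Real.sqrt_le_sqrt (by norm_num)
    have h2 : (1 : ℝ) / Real.sqrt 2 ≤ 1 := by
      rw [div_le_one (by positivity)]
      exact h1
    linarith
  rw [ge_iff_le, ← lintegral_const_mul' _ _ ENNReal.ofReal_ne_top]
  apply lintegral_mono
  intro x
  simp only [← ENNReal.ofReal_mul hlam0]
  exact ENNReal.ofReal_le_ofReal (korn_pointwise v1 v2 x)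
end

section
/- (Boundary-strip estimate.) Let Ω ⊂ ℝ² be a nonempty bounded convex open set. There exists a constant C > 0, depending only on Ω, such that for every ε > 0 and every continuously differentiable function v : ℝ² → ℝ, ∫_{Ω_ε} |v(x)|² dx ≤ C ε ( ∫_Ω |v(x)|² dx + ∫_Ω |∇v(x)|² dx ), where Ω_ε := { x ∈ Ω : dist(x, ∂Ω) ≤ ε }. -/
/-
Fix a ball `B(c, r) ⊆ Ω ⊆ B̄(c, R)`. For `x ∈ Ω`, the one-dimensional inequality
`h(0)² ≤ ∫₀^{1/2} (3h² + h'²)` along the segment `t ↦ c + (1 - t)(x - c)` bounds `v(x)²` by an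
average of `3v² + R²|∇v|²` over the contracted points. Integrating over the strip `Ω_ε` and
changing variables `z = c + (1 - t)(x - c)` (Jacobian at least `1/4`), it remains to see that a
fixed `z` is hit for a set of parameters `t` of length at most `ε / r`. This is where convexity
enters: contracting `Ω` towards `c` by the factor `s` keeps a ball of radius `(1 - s) r` around
every point inside `Ω`, so two parameters `t ≤ t'` for which both preimages of `z` lie in `Ω_ε`
satisfy `(t' - t) r ≤ ε`.
-/

open MeasureTheory

open Metric Set AffineMap Module
open scoped ENNReal

lemma sq_le_integral_of_hasDerivAt {h h' : ℝ → ℝ} {a : ℝ} (ha : 0 < a)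
    (hd : ∀ t ∈ Icc 0 a, HasDerivAt h (h' t) t) (hh' : ContinuousOn h' (Icc 0 a)) :
    h 0 ^ 2 ≤ ∫ t in 0..a, ((a⁻¹ + 1) * h t ^ 2 + h' t ^ 2) := by
  have hh : ContinuousOn h (Icc 0 a) := fun t ht => (hd t ht).continuousAt.continuousWithinAt
  have hint : ∀ {u : ℝ → ℝ}, ContinuousOn u (Icc 0 a) → IntervalIntegrable u volume 0 a :=
    fun hu => hu.intervalIntegrable_of_Icc ha.le
  -- The weight `1 - t / a` kills the boundary term at `t = a`.
  set g' : ℝ → ℝ := fun t => -a⁻¹ * h t ^ 2 + (1 - t / a) * (2 * h t * h' t)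
  have hg : ∀ t ∈ uIcc 0 a, HasDerivAt (fun t => (1 - t / a) * h t ^ 2) (g' t) t := by
    intro t ht
    rw [uIcc_of_le ha.le] at ht
    refine ((((hasDerivAt_id' t).div_const a).const_sub 1).mul ((hd t ht).fun_pow 2)).congr_deriv ?_
    simp only [g']
    ring
  have hftc : ∫ t in 0..a, g' t = -h 0 ^ 2 := by
    rw [intervalIntegral.integral_eq_sub_of_hasDerivAt hg (hint (by fun_prop))]
    simp [div_self ha.ne']
  calc h 0 ^ 2 = ∫ t in 0..a, -g' t := by rw [intervalIntegral.integral_neg, hftc, neg_neg]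
    _ ≤ ∫ t in 0..a, ((a⁻¹ + 1) * h t ^ 2 + h' t ^ 2) := by
      refine intervalIntegral.integral_mono_on ha.le (hint (by fun_prop)) (hint (by fun_prop))
        fun t ht => ?_
      have hw₀ : 0 ≤ 1 - t / a := by rw [sub_nonneg, div_le_one ha]; exact ht.2
      have hw₁ : 1 - t / a ≤ 1 := by have := div_nonneg ht.1 ha.le; linarith
      nlinarith [mul_nonneg hw₀ (sq_nonneg (h t + h' t)),
        mul_nonneg (sub_nonneg.2 hw₁) (add_nonneg (sq_nonneg (h t)) (sq_nonneg (h' t)))]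

lemma le_infDist_frontier_of_ball_subset {X : Type*} [PseudoMetricSpace X] {s : Set X} {y : X}
    {ρ : ℝ} (hfr : (frontier s).Nonempty) (h : ball y ρ ⊆ s) : ρ ≤ infDist y (frontier s) := by
  refine (le_infDist hfr).2 fun z hz => not_lt.1 fun hlt => hz.2 ?_
  exact interior_maximal h isOpen_ball (mem_ball'.2 hlt)

def boundaryStrip {X : Type*} [PseudoMetricSpace X] (Ω : Set X) (ε : ℝ) : Set X :=
  {x ∈ Ω | infDist x (frontier Ω) ≤ ε}

lemma MeasurableSet.boundaryStrip {X : Type*} [PseudoMetricSpace X] [MeasurableSpace X]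
    [OpensMeasurableSpace X] {Ω : Set X} (hΩ : MeasurableSet Ω) (ε : ℝ) :
    MeasurableSet (boundaryStrip Ω ε) :=
  hΩ.inter (measurableSet_le (continuous_infDist_pt _).measurable measurable_const)

section

variable {E : Type*} [NormedAddCommGroup E] [NormedSpace ℝ E]

lemma hasDerivAt_homothety_one_sub (c x : E) (t : ℝ) :
    HasDerivAt (fun t => homothety c (1 - t) x) (c - x) t := by
  simp only [homothety_apply, vsub_eq_sub, vadd_eq_add]
  refine ((((hasDerivAt_id' t).const_sub 1).smul_const (x - c)).add_const c).congr_deriv ?_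
  simp

lemma sq_le_integral_along_homothety {v : E → ℝ} (hv : ContDiff ℝ 1 v) (c : E) {x : E} {R : ℝ}
    (hx : ‖x - c‖ ≤ R) :
    v x ^ 2 ≤ ∫ t in (0 : ℝ)..1 / 2,
      (3 * v (homothety c (1 - t) x) ^ 2 + R ^ 2 * ‖fderiv ℝ v (homothety c (1 - t) x)‖ ^ 2) := by
  have hDv : Continuous (fderiv ℝ v) := hv.continuous_fderiv one_ne_zero
  have hγ : Continuous fun t : ℝ => homothety c (1 - t) x := by
    simp only [homothety_apply, vsub_eq_sub, vadd_eq_add]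
    fun_prop
  have hsq := sq_le_integral_of_hasDerivAt (a := 1 / 2) (by norm_num)
    (h := fun t => v (homothety c (1 - t) x))
    (h' := fun t => fderiv ℝ v (homothety c (1 - t) x) (c - x))
    (fun t _ => ((hv.differentiable one_ne_zero _).hasFDerivAt).comp_hasDerivAt t
      (hasDerivAt_homothety_one_sub c x t))
    ((hDv.comp hγ).clm_apply continuous_const).continuousOn
  rw [sub_zero, homothety_one, AffineMap.id_apply] at hsq
  refine hsq.trans (intervalIntegral.integral_mono_on (by norm_num) ?_ ?_ fun t _ => ?_)
  · exact (Continuous.intervalIntegrable (by fun_prop) _ _)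
  · exact (Continuous.intervalIntegrable (by fun_prop) _ _)
  · have hR : |fderiv ℝ v (homothety c (1 - t) x) (c - x)| ≤
        ‖fderiv ℝ v (homothety c (1 - t) x)‖ * R :=
      ((fderiv ℝ v _).le_opNorm _).trans
        (mul_le_mul_of_nonneg_left (norm_sub_rev c x ▸ hx) (norm_nonneg _))
    have := sq_le_sq' (abs_le.1 hR).1 (abs_le.1 hR).2
    rw [show ((1 : ℝ) / 2)⁻¹ + 1 = 3 by norm_num]
    linarith

lemma Convex.ball_homothety_subset {Ω : Set E} (hΩ : Convex ℝ Ω) {c x : E} {r : ℝ}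
    (hc : ball c r ⊆ Ω) (hx : x ∈ Ω) {s : ℝ} (hs₀ : 0 ≤ s) (hs₁ : s ≤ 1) :
    ball (homothety c s x) ((1 - s) * r) ⊆ Ω := by
  intro y hy
  rcases hs₁.eq_or_lt with rfl | hs₁
  · simp at hy
  have hs : 0 < 1 - s := sub_pos.2 hs₁
  set w := c + (1 - s)⁻¹ • (y - homothety c s x)
  have hw : w ∈ ball c r := by
    rw [mem_ball, dist_eq_norm, add_sub_cancel_left, norm_smul, norm_inv, Real.norm_of_nonneg hs.le,
      inv_mul_lt_iff₀ hs, ← dist_eq_norm]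
    exact hy
  have hy : y = s • x + (1 - s) • w := by
    simp only [w, homothety_apply, vsub_eq_sub, vadd_eq_add, smul_add, smul_smul,
      mul_inv_cancel₀ hs.ne']
    module
  exact hy ▸ hΩ hx (hc hw) hs₀ hs.le (by ring)

lemma Convex.homothety_mem {Ω : Set E} (hΩ : Convex ℝ Ω) {c x : E} (hc : c ∈ Ω) (hx : x ∈ Ω)
    {s : ℝ} (hs : s ∈ Icc (0 : ℝ) 1) : homothety c s x ∈ Ω :=
  homothety_eq_lineMap c s x ▸ hΩ.lineMap_mem hc hx hs

section Haar

variable [MeasurableSpace E] [BorelSpace E] [FiniteDimensional ℝ E] (μ : Measure E)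
  [μ.IsAddHaarMeasure]

lemma MeasureTheory.Measure.map_homothety_addHaar (c : E) {s : ℝ} (hs : s ≠ 0) :
    μ.map (homothety c s) = ENNReal.ofReal |s⁻¹ ^ finrank ℝ E| • μ := by
  ext A hA
  have hinv : ∀ a b : ℝ, a * b = 1 → Function.LeftInverse (homothety c a) (homothety c b) :=
    fun a b hab x => by rw [← homothety_mul_apply, hab, homothety_one, AffineMap.id_apply]
  have hpre : homothety c s ⁻¹' A = homothety c s⁻¹ '' A :=
    congrFun (image_eq_preimage_of_inverse (hinv _ _ (mul_inv_cancel₀ hs))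
      (hinv _ _ (inv_mul_cancel₀ hs))).symm A
  rw [Measure.map_apply (homothety_continuous c s).measurable hA, hpre,
    Measure.addHaar_image_homothety, Measure.smul_apply, smul_eq_mul]

lemma lintegral_comp_homothety (c : E) {s : ℝ} (hs : s ≠ 0) {f : E → ℝ≥0∞} (hf : Measurable f) :
    ∫⁻ x, f (homothety c s x) ∂μ = ENNReal.ofReal |s⁻¹ ^ finrank ℝ E| * ∫⁻ z, f z ∂μ := by
  rw [← lintegral_map hf (homothety_continuous c s).measurable,
    Measure.map_homothety_addHaar μ c hs, lintegral_smul_measure, smul_eq_mul]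

lemma setLIntegral_comp_homothety (c : E) {s : ℝ} (hs : s ≠ 0) {S : Set E} (hS : MeasurableSet S)
    {f : E → ℝ≥0∞} (hf : Measurable f) :
    ∫⁻ x in S, f (homothety c s x) ∂μ =
      ENNReal.ofReal |s⁻¹ ^ finrank ℝ E| *
        ∫⁻ z, S.indicator 1 (homothety c s⁻¹ z) * f z ∂μ := by
  have hinv : ∀ x, homothety c s⁻¹ (homothety c s x) = x := fun x => by
    rw [← homothety_mul_apply, inv_mul_cancel₀ hs, homothety_one, AffineMap.id_apply]
  have hg : Measurable fun z => S.indicator 1 (homothety c s⁻¹ z) * f z :=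
    ((measurable_one.indicator hS).comp (homothety_continuous c s⁻¹).measurable).mul hf
  rw [← lintegral_comp_homothety μ c hs hg, ← lintegral_indicator hS]
  congr 1 with x
  by_cases hx : x ∈ S <;> simp [hinv, hx]

lemma measurable_homothety_one_sub_inv (c : E) :
    Measurable fun p : ℝ × E => homothety c (1 - p.1)⁻¹ p.2 := by
  simp only [homothety_apply, vsub_eq_sub, vadd_eq_add]
  fun_prop

lemma setLIntegral_setLIntegral_homothety_le (c : E) {S : Set E} (hS : MeasurableSet S)
    {f : E → ℝ≥0∞} (hf : Measurable f) :
    ∫⁻ x in S, (∫⁻ t in Ioc (0 : ℝ) (1 / 2), f (homothety c (1 - t) x)) ∂μ ≤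
      2 ^ finrank ℝ E *
        ∫⁻ z, (∫⁻ t in Ioc (0 : ℝ) (1 / 2), S.indicator 1 (homothety c (1 - t)⁻¹ z)) * f z ∂μ := by
  have hind : Measurable (Function.uncurry fun (t : ℝ) (z : E) =>
      S.indicator (1 : E → ℝ≥0∞) (homothety c (1 - t)⁻¹ z)) :=
    (measurable_one.indicator hS).comp (measurable_homothety_one_sub_inv c)
  set g : ℝ → E → ℝ≥0∞ := fun t z => S.indicator 1 (homothety c (1 - t)⁻¹ z) * f z
  have hg : Measurable (Function.uncurry g) := hind.mul (hf.comp measurable_snd)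
  have hfh : Measurable fun p : E × ℝ => f (homothety c (1 - p.2) p.1) := by
    refine hf.comp ?_
    simp only [homothety_apply, vsub_eq_sub, vadd_eq_add]
    fun_prop
  have hslice : ∀ t ∈ Ioc (0 : ℝ) (1 / 2),
      ∫⁻ x in S, f (homothety c (1 - t) x) ∂μ ≤ 2 ^ finrank ℝ E * ∫⁻ z, g t z ∂μ := by
    intro t ht
    have ht₁ : 0 < 1 - t := by linarith [ht.2]
    have hjac : |(1 - t)⁻¹ ^ finrank ℝ E| ≤ 2 ^ finrank ℝ E := by
      rw [abs_pow, abs_of_pos (inv_pos.2 ht₁)]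
      exact pow_le_pow_left₀ (inv_pos.2 ht₁).le
        ((inv_le_comm₀ ht₁ two_pos).2 (by linarith [ht.2])) _
    rw [setLIntegral_comp_homothety μ c ht₁.ne' hS hf]
    gcongr
    exact (ENNReal.ofReal_le_ofReal hjac).trans_eq (by simp [ENNReal.ofReal_pow])
  calc ∫⁻ x in S, (∫⁻ t in Ioc (0 : ℝ) (1 / 2), f (homothety c (1 - t) x)) ∂μ
      = ∫⁻ t in Ioc (0 : ℝ) (1 / 2), ∫⁻ x in S, f (homothety c (1 - t) x) ∂μ :=
        lintegral_lintegral_swap hfh.aemeasurable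
    _ ≤ ∫⁻ t in Ioc (0 : ℝ) (1 / 2), 2 ^ finrank ℝ E * ∫⁻ z, g t z ∂μ :=
        setLIntegral_mono (hg.lintegral_prod_right.const_mul _) hslice
    _ = 2 ^ finrank ℝ E * ∫⁻ z, (∫⁻ t in Ioc (0 : ℝ) (1 / 2), g t z) ∂μ := by
        rw [lintegral_const_mul _ hg.lintegral_prod_right, lintegral_lintegral_swap hg.aemeasurable]
    _ = _ := by
        congr 1
        refine lintegral_congr fun z => ?_
        simp only [g]
        exact lintegral_mul_const _ hind.of_uncurry_right

end Haar

variable {Ω : Set E} {c : E} {r ε : ℝ}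

lemma Convex.one_sub_mul_le_of_homothety_mem_boundaryStrip (hΩ : Convex ℝ Ω)
    (hc : ball c r ⊆ Ω) (hfr : (frontier Ω).Nonempty) {x : E} (hx : x ∈ Ω) {s : ℝ} (hs₀ : 0 ≤ s)
    (hs₁ : s ≤ 1) (h : homothety c s x ∈ boundaryStrip Ω ε) : (1 - s) * r ≤ ε :=
  (le_infDist_frontier_of_ball_subset hfr (hΩ.ball_homothety_subset hc hx hs₀ hs₁)).trans h.2

lemma Convex.volume_setOf_homothety_inv_mem_boundaryStrip_le (hΩ : Convex ℝ Ω)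
    (hc : ball c r ⊆ Ω) (hr : 0 < r) (hfr : (frontier Ω).Nonempty) (z : E) :
    volume {t ∈ Ico (0 : ℝ) 1 | homothety c (1 - t)⁻¹ z ∈ boundaryStrip Ω ε} ≤
      ENNReal.ofReal (ε / r) := by
  set T := {t ∈ Ico (0 : ℝ) 1 | homothety c (1 - t)⁻¹ z ∈ boundaryStrip Ω ε}
  have hgap : ∀ t ∈ T, ∀ t' ∈ T, t ≤ t' → t' - t ≤ ε / r := by
    rintro t ⟨⟨ht₀, ht₁⟩, hst⟩ t' ⟨⟨-, ht'₁⟩, hst'⟩ htt'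
    have hpos : 0 < 1 - t := by linarith
    have hpos' : 0 < 1 - t' := by linarith
    have hrel : homothety c (1 - t)⁻¹ z =
        homothety c ((1 - t') / (1 - t)) (homothety c (1 - t')⁻¹ z) := by
      rw [← homothety_mul_apply]
      congr 2
      field_simp
    have hdepth := hΩ.one_sub_mul_le_of_homothety_mem_boundaryStrip hc hfr hst'.1
      (div_nonneg hpos'.le hpos.le) ((div_le_one hpos).2 (by linarith)) (hrel ▸ hst)
    have hscale : t' - t ≤ 1 - (1 - t') / (1 - t) := by
      rw [one_sub_div hpos.ne', le_div_iff₀ hpos]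
      nlinarith
    rw [le_div_iff₀ hr]
    exact (mul_le_mul_of_nonneg_right hscale hr.le).trans hdepth
  refine (Real.volume_le_diam T).trans (ediam_le fun t ht t' ht' => ?_)
  rw [edist_dist, Real.dist_eq]
  refine ENNReal.ofReal_le_ofReal ?_
  rcases le_total t t' with h | h
  · rw [abs_sub_comm, abs_of_nonneg (sub_nonneg.2 h)]
    exact hgap t ht t' ht' h
  · rw [abs_of_nonneg (sub_nonneg.2 h)]
    exact hgap t' ht' t ht h

lemma Convex.setLIntegral_indicator_boundaryStrip_homothety_le (hΩ : Convex ℝ Ω)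
    (hc : ball c r ⊆ Ω) (hr : 0 < r) (hfr : (frontier Ω).Nonempty) (z : E) :
    ∫⁻ t in Ioc (0 : ℝ) (1 / 2), (boundaryStrip Ω ε).indicator 1 (homothety c (1 - t)⁻¹ z) ≤
      Ω.indicator (fun _ => ENNReal.ofReal (ε / r)) z := by
  set T := {t ∈ Ico (0 : ℝ) 1 | homothety c (1 - t)⁻¹ z ∈ boundaryStrip Ω ε}
  by_cases hz : z ∈ Ω
  · rw [indicator_of_mem hz]
    calc ∫⁻ t in Ioc (0 : ℝ) (1 / 2), (boundaryStrip Ω ε).indicator 1 (homothety c (1 - t)⁻¹ z)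
        ≤ ∫⁻ t in Ioc (0 : ℝ) (1 / 2), T.indicator 1 t := by
          refine setLIntegral_mono' measurableSet_Ioc fun t ht => ?_
          by_cases hst : homothety c (1 - t)⁻¹ z ∈ boundaryStrip Ω ε
          · have hT : t ∈ T := ⟨⟨ht.1.le, by linarith [ht.2]⟩, hst⟩
            simp [hst, hT]
          · simp [hst]
      _ ≤ ∫⁻ t, T.indicator 1 t := setLIntegral_le_lintegral _ _
      _ ≤ volume T := (lintegral_indicator_le _ _).trans_eq (setLIntegral_one T)
      _ ≤ ENNReal.ofReal (ε / r) := hΩ.volume_setOf_homothety_inv_mem_boundaryStrip_le hc hr hfr z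
  · rw [indicator_of_notMem hz]
    refine le_of_eq (setLIntegral_eq_zero measurableSet_Ioc fun t ht => ?_)
    refine indicator_of_notMem (fun hst => hz ?_) _
    have hpos : 0 < 1 - t := by linarith [ht.2]
    have hz' : homothety c (1 - t) (homothety c (1 - t)⁻¹ z) = z := by
      rw [← homothety_mul_apply, mul_inv_cancel₀ hpos.ne', homothety_one, AffineMap.id_apply]
    exact hz' ▸ hΩ.homothety_mem (hc (mem_ball_self hr)) hst.1 ⟨hpos.le, by linarith [ht.1]⟩

variable [MeasurableSpace E] [BorelSpace E] [FiniteDimensional ℝ E] (μ : Measure E)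
  [μ.IsAddHaarMeasure]

lemma Convex.setLIntegral_boundaryStrip_le (hΩ : Convex ℝ Ω) (hΩm : MeasurableSet Ω)
    (hc : ball c r ⊆ Ω) (hr : 0 < r) (hfr : (frontier Ω).Nonempty) {f : E → ℝ≥0∞}
    (hf : Measurable f) :
    ∫⁻ x in boundaryStrip Ω ε, (∫⁻ t in Ioc (0 : ℝ) (1 / 2), f (homothety c (1 - t) x)) ∂μ ≤
      2 ^ finrank ℝ E * ENNReal.ofReal (ε / r) * ∫⁻ z in Ω, f z ∂μ := by
  refine (setLIntegral_setLIntegral_homothety_le μ c (hΩm.boundaryStrip ε) hf).trans ?_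
  calc 2 ^ finrank ℝ E * ∫⁻ z, (∫⁻ t in Ioc (0 : ℝ) (1 / 2),
          (boundaryStrip Ω ε).indicator 1 (homothety c (1 - t)⁻¹ z)) * f z ∂μ
      ≤ 2 ^ finrank ℝ E * ∫⁻ z, Ω.indicator (fun _ => ENNReal.ofReal (ε / r)) z * f z ∂μ := by
        gcongr with z
        exact hΩ.setLIntegral_indicator_boundaryStrip_homothety_le hc hr hfr z
    _ = 2 ^ finrank ℝ E * ENNReal.ofReal (ε / r) * ∫⁻ z in Ω, f z ∂μ := by
        simp_rw [← indicator_mul_left]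
        rw [lintegral_indicator hΩm, lintegral_const_mul' _ _ ENNReal.ofReal_ne_top, mul_assoc]

lemma Convex.integral_sq_boundaryStrip_le (hΩ : Convex ℝ Ω) (hΩm : MeasurableSet Ω)
    (hc : ball c r ⊆ Ω) {R : ℝ} (hΩR : Ω ⊆ closedBall c R) (hr : 0 < r) (hε : 0 ≤ ε)
    (hfr : (frontier Ω).Nonempty) {v : E → ℝ} (hv : ContDiff ℝ 1 v) :
    ∫ x in boundaryStrip Ω ε, v x ^ 2 ∂μ ≤
      2 ^ finrank ℝ E * (ε / r) * ∫ x in Ω, (3 * v x ^ 2 + R ^ 2 * ‖fderiv ℝ v x‖ ^ 2) ∂μ := by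
  set W : E → ℝ := fun z => 3 * v z ^ 2 + R ^ 2 * ‖fderiv ℝ v z‖ ^ 2
  have hDv : Continuous (fderiv ℝ v) := hv.continuous_fderiv one_ne_zero
  have hWc : Continuous W := by have := hv.continuous; fun_prop
  have hW₀ : ∀ z, 0 ≤ W z := fun z => by positivity
  have hWint : IntegrableOn W Ω μ :=
    (hWc.continuousOn.integrableOn_compact (isCompact_closedBall c R)).mono_set hΩR
  have hpoint : ∀ x ∈ boundaryStrip Ω ε, ENNReal.ofReal (v x ^ 2) ≤
      ∫⁻ t in Ioc (0 : ℝ) (1 / 2), ENNReal.ofReal (W (homothety c (1 - t) x)) := by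
    intro x hx
    have hxR : ‖x - c‖ ≤ R := by simpa [dist_eq_norm] using hΩR hx.1
    rw [← ofReal_integral_eq_lintegral_ofReal ?_ (ae_of_all _ fun t => hW₀ _),
      ← intervalIntegral.integral_of_le (by norm_num)]
    · exact ENNReal.ofReal_le_ofReal (sq_le_integral_along_homothety hv c hxR)
    · refine Continuous.integrableOn_Ioc (hWc.comp ?_)
      simp only [homothety_apply, vsub_eq_sub, vadd_eq_add]
      fun_prop
  have hlint : ∫⁻ x in boundaryStrip Ω ε, ENNReal.ofReal (v x ^ 2) ∂μ ≤
      ENNReal.ofReal (2 ^ finrank ℝ E * (ε / r) * ∫ x in Ω, W x ∂μ) := by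
    calc ∫⁻ x in boundaryStrip Ω ε, ENNReal.ofReal (v x ^ 2) ∂μ
        ≤ ∫⁻ x in boundaryStrip Ω ε,
            (∫⁻ t in Ioc (0 : ℝ) (1 / 2), ENNReal.ofReal (W (homothety c (1 - t) x))) ∂μ :=
          setLIntegral_mono' (hΩm.boundaryStrip ε) hpoint
      _ ≤ 2 ^ finrank ℝ E * ENNReal.ofReal (ε / r) * ∫⁻ z in Ω, ENNReal.ofReal (W z) ∂μ :=
          hΩ.setLIntegral_boundaryStrip_le μ hΩm hc hr hfr
            (ENNReal.measurable_ofReal.comp hWc.measurable)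
      _ = _ := by
          rw [← ofReal_integral_eq_lintegral_ofReal hWint (ae_of_all _ hW₀),
            ENNReal.ofReal_mul (by positivity), ENNReal.ofReal_mul (by positivity),
            ENNReal.ofReal_pow zero_le_two, ENNReal.ofReal_ofNat]
  rw [integral_eq_lintegral_of_nonneg_ae (ae_of_all _ fun x => sq_nonneg _)
    (hv.continuous.pow 2).aestronglyMeasurable]
  have := setIntegral_nonneg (μ := μ) hΩm fun x _ => hW₀ x
  exact ENNReal.toReal_le_of_le_ofReal (by positivity) hlint

end

lemma ContinuousLinearMap.norm_le_abs_apply_add_abs_apply (L : ℝ × ℝ →L[ℝ] ℝ) :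
    ‖L‖ ≤ |L (1, 0)| + |L (0, 1)| := by
  refine L.opNorm_le_bound (by positivity) fun u => ?_
  have hu : L u = u.1 * L (1, 0) + u.2 * L (0, 1) := by
    conv_lhs => rw [show u = u.1 • ((1 : ℝ), (0 : ℝ)) + u.2 • ((0 : ℝ), (1 : ℝ)) by ext <;> simp]
    rw [map_add, map_smul, map_smul, smul_eq_mul, smul_eq_mul]
  rw [hu, Real.norm_eq_abs]
  calc |u.1 * L (1, 0) + u.2 * L (0, 1)| ≤ |u.1| * |L (1, 0)| + |u.2| * |L (0, 1)| := by
        rw [← abs_mul, ← abs_mul]; exact abs_add_le _ _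
    _ ≤ ‖u‖ * |L (1, 0)| + ‖u‖ * |L (0, 1)| := by
        gcongr
        exacts [_root_.norm_fst_le u, _root_.norm_snd_le u]
    _ = (|L (1, 0)| + |L (0, 1)|) * ‖u‖ := by ring

lemma sq_norm_fderiv_le (v : ℝ × ℝ → ℝ) (y : ℝ × ℝ) :
    ‖fderiv ℝ v y‖ ^ 2 ≤ 2 * (pd1 v y ^ 2 + pd2 v y ^ 2) := by
  have h := (fderiv ℝ v y).norm_le_abs_apply_add_abs_apply
  have h0 : 0 ≤ ‖fderiv ℝ v y‖ := norm_nonneg _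
  rw [pd1, pd2, ← sq_abs (fderiv ℝ v y (1, 0)), ← sq_abs (fderiv ℝ v y (0, 1))]
  nlinarith [sq_nonneg (|fderiv ℝ v y (1, 0)| - |fderiv ℝ v y (0, 1)|)]

lemma setIntegral_sq_add_sq_norm_fderiv_le {Ω : Set (ℝ × ℝ)} (hΩm : MeasurableSet Ω)
    (hΩb : Bornology.IsBounded Ω) {v : ℝ × ℝ → ℝ} (hv : ContDiff ℝ 1 v) (a : ℝ) {b : ℝ}
    (hb : 0 ≤ b) :
    ∫ x in Ω, (a * v x ^ 2 + b * ‖fderiv ℝ v x‖ ^ 2) ≤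
      a * (∫ x in Ω, v x ^ 2) + 2 * b * ∫ x in Ω, (pd1 v x ^ 2 + pd2 v x ^ 2) := by
  have hint : ∀ {f : ℝ × ℝ → ℝ}, Continuous f → IntegrableOn f Ω := fun hf =>
    (hf.continuousOn.integrableOn_compact hΩb.isCompact_closure).mono_set subset_closure
  have hvc := hv.continuous
  have hDv : Continuous (fderiv ℝ v) := hv.continuous_fderiv one_ne_zero
  have hpd₁ : Continuous (pd1 v) := hDv.clm_apply continuous_const
  have hpd₂ : Continuous (pd2 v) := hDv.clm_apply continuous_const
  rw [← integral_const_mul, ← integral_const_mul,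
    ← integral_add (hint (by fun_prop)) (hint (by fun_prop))]
  refine setIntegral_mono_on (hint (by fun_prop)) (hint (by fun_prop)) hΩm fun x _ => ?_
  nlinarith [sq_norm_fderiv_le v x]

/-- Boundary-strip estimate: for a nonempty bounded convex open set `Ω ⊂ ℝ²`, there is
`C > 0`, depending only on `Ω`, such that for every `ε > 0` and every `C¹` function
`v : ℝ² → ℝ`, `∫_{Ω_ε} |v|² ≤ C ε (∫_Ω |v|² + ∫_Ω |∇v|²)`, where
`Ω_ε = {x ∈ Ω : dist(x, ∂Ω) ≤ ε}`. -/
theorem boundary_strip_estimate (Ω : Set (ℝ × ℝ)) (hne : Ω.Nonempty)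
    (hΩo : IsOpen Ω) (hΩb : Bornology.IsBounded Ω) (hΩc : Convex ℝ Ω) :
    ∃ C : ℝ, 0 < C ∧
      ∀ ε : ℝ, 0 < ε → ∀ v : ℝ × ℝ → ℝ, ContDiff ℝ 1 v →
        (∫ x in {x ∈ Ω | Metric.infDist x (frontier Ω) ≤ ε}, (v x) ^ 2) ≤
          C * ε * ((∫ x in Ω, (v x) ^ 2) +
            ∫ x in Ω, ((pd1 v x) ^ 2 + (pd2 v x) ^ 2)) := by
  obtain ⟨c, hcΩ⟩ := hne
  obtain ⟨r, hr, hball⟩ := isOpen_iff.mp hΩo c hcΩ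
  obtain ⟨R, hΩR⟩ := hΩb.subset_closedBall c
  have hfr : (frontier Ω).Nonempty :=
    nonempty_frontier_iff.2 ⟨⟨c, hcΩ⟩, fun h => NormedSpace.unbounded_univ ℝ (ℝ × ℝ) (h ▸ hΩb)⟩
  refine ⟨4 * (3 + 2 * R ^ 2) / r, by positivity, fun ε hε v hv => ?_⟩
  have hstrip :=
    hΩc.integral_sq_boundaryStrip_le volume hΩo.measurableSet hball hΩR hr hε.le hfr hv
  rw [show finrank ℝ (ℝ × ℝ) = 2 by simp] at hstrip
  have hweight := setIntegral_sq_add_sq_norm_fderiv_le hΩo.measurableSet hΩb hv 3 (sq_nonneg R)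
  set A := ∫ x in Ω, v x ^ 2
  set B := ∫ x in Ω, (pd1 v x ^ 2 + pd2 v x ^ 2)
  have hA : 0 ≤ A := setIntegral_nonneg hΩo.measurableSet fun x _ => sq_nonneg _
  have hB : 0 ≤ B := setIntegral_nonneg hΩo.measurableSet fun x _ => by positivity
  calc ∫ x in boundaryStrip Ω ε, v x ^ 2
      ≤ 2 ^ 2 * (ε / r) * (3 * A + 2 * R ^ 2 * B) := hstrip.trans (by gcongr)
    _ ≤ 2 ^ 2 * (ε / r) * ((3 + 2 * R ^ 2) * (A + B)) := by gcongr; nlinarith [sq_nonneg R]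
    _ = 4 * (3 + 2 * R ^ 2) / r * ε * (A + B) := by ring
end

section
/- Let a₁, a₂, a₃ ∈ ℝ² be affinely independent, and let λ₁, λ₂, λ₃ : ℝ² → ℝ be the barycentric coordinates (the affine functions with λ_i(a_m) = δ_{im}). Set ℓ₁ = ‖a₂ − a₃‖, ℓ₂ = ‖a₃ − a₁‖, ℓ₃ = ‖a₁ − a₂‖. Then (∇λ₁ · ∇λ₂)/‖∇λ₂‖² = −(ℓ₁² + ℓ₂² − ℓ₃²)/(2ℓ₂²), and symmetrically (∇λ₁ · ∇λ₃)/‖∇λ₃‖² = −(ℓ₁² + ℓ₃² − ℓ₂²)/(2ℓ₃²). -/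
open RealInnerProductSpace Module Submodule

/-
In the plane, `g₂ = ∇λ₂` is orthogonal to the edge `v = a₃ - a₁` (λ₂ vanishes on it), so `v` and
`g₂` form an orthogonal basis. Expanding `w = a₂ - a₁` in that basis and pairing with `g₁`, using
`⟪g₁, v⟫ = ⟪g₁, w⟫ = -1` and `⟪g₂, w⟫ = 1`, gives `⟪g₁, g₂⟫ / ‖g₂‖² = ⟪v, w⟫ / ‖v‖² - 1`; the
polarization identity `2⟪v, w⟫ = ‖v‖² + ‖w‖² - ‖w - v‖²` turns this into edge lengths. The second
formula is the first one with `a₂` and `a₃` exchanged.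
-/

section Plane

variable {E : Type*} [NormedAddCommGroup E] [InnerProductSpace ℝ E] [Fact (finrank ℝ E = 2)]

theorem orthogonal_span_singleton_eq_span_singleton {u v : E} (hv : v ≠ 0) (hu : u ≠ 0)
    (huv : ⟪v, u⟫ = 0) : (ℝ ∙ v)ᗮ = ℝ ∙ u :=
  eq_span_singleton_of_mem_of_finrank_eq_one (finrank_orthogonal_span_singleton (n := 1) hv)
    (mem_orthogonal_singleton_iff_inner_right.mpr huv) hu

theorem eq_smul_add_smul_of_inner_eq_zero {u v : E} (hv : v ≠ 0) (hu : u ≠ 0)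
    (huv : ⟪v, u⟫ = 0) (x : E) :
    x = (⟪v, x⟫ / ‖v‖ ^ 2) • v + (⟪u, x⟫ / ‖u‖ ^ 2) • u := by
  have hproj := (ℝ ∙ v).starProjection_add_starProjection_orthogonal x
  simp only [orthogonal_span_singleton_eq_span_singleton hv hu huv, starProjection_singleton]
    at hproj
  simpa using hproj.symm

theorem real_inner_eq_add_of_inner_eq_zero {u v : E} (hv : v ≠ 0) (hu : u ≠ 0)
    (huv : ⟪v, u⟫ = 0) (x y : E) :
    ⟪y, x⟫ = ⟪v, x⟫ * ⟪y, v⟫ / ‖v‖ ^ 2 + ⟪u, x⟫ * ⟪y, u⟫ / ‖u‖ ^ 2 := by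
  conv_lhs => rw [eq_smul_add_smul_of_inner_eq_zero hv hu huv x]
  rw [inner_add_right, real_inner_smul_right, real_inner_smul_right, div_mul_eq_mul_div,
    div_mul_eq_mul_div]

theorem real_inner_div_norm_sq_of_barycentric_gradients {a₁ a₂ a₃ g₁ g₂ : E}
    (h₁₂ : ⟪g₁, a₂ - a₁⟫ = -1) (h₁₃ : ⟪g₁, a₃ - a₁⟫ = -1)
    (h₂₂ : ⟪g₂, a₂ - a₁⟫ = 1) (h₂₃ : ⟪g₂, a₃ - a₁⟫ = 0) :
    ⟪g₁, g₂⟫ / ‖g₂‖ ^ 2 =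
      -(‖a₂ - a₃‖ ^ 2 + ‖a₃ - a₁‖ ^ 2 - ‖a₁ - a₂‖ ^ 2) / (2 * ‖a₃ - a₁‖ ^ 2) := by
  have hv : a₃ - a₁ ≠ 0 := fun h ↦ by simp [h] at h₁₃
  have hg₂ : g₂ ≠ 0 := fun h ↦ by simp [h] at h₂₂
  have hv2 : ‖a₃ - a₁‖ ^ 2 ≠ 0 := by positivity
  have hexpand :=
    real_inner_eq_add_of_inner_eq_zero hv hg₂ (by rwa [real_inner_comm]) (a₂ - a₁) g₁
  rw [h₁₂, h₁₃, h₂₂, one_mul, mul_neg_one, neg_div] at hexpand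
  have hpolar : 2 * ⟪a₃ - a₁, a₂ - a₁⟫ = ‖a₃ - a₁‖ ^ 2 + ‖a₁ - a₂‖ ^ 2 - ‖a₂ - a₃‖ ^ 2 := by
    rw [show a₂ - a₃ = (a₂ - a₁) - (a₃ - a₁) by abel, norm_sub_sq_real (a₂ - a₁),
      norm_sub_rev a₁ a₂, real_inner_comm]
    ring
  calc ⟪g₁, g₂⟫ / ‖g₂‖ ^ 2 = ⟪a₃ - a₁, a₂ - a₁⟫ / ‖a₃ - a₁‖ ^ 2 - 1 := by linarith
    _ = _ := by field_simp; linarith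

end Plane

theorem barycentric_gradient_inner_formula_general
    (a₁ a₂ a₃ g₁ g₂ g₃ : EuclideanSpace ℝ (Fin 2)) (c₁ c₂ c₃ : ℝ)
    (h11 : c₁ + ⟪g₁, a₁⟫ = 1) (h12 : c₁ + ⟪g₁, a₂⟫ = 0) (h13 : c₁ + ⟪g₁, a₃⟫ = 0)
    (h21 : c₂ + ⟪g₂, a₁⟫ = 0) (h22 : c₂ + ⟪g₂, a₂⟫ = 1) (h23 : c₂ + ⟪g₂, a₃⟫ = 0)
    (h31 : c₃ + ⟪g₃, a₁⟫ = 0) (h32 : c₃ + ⟪g₃, a₂⟫ = 0) (h33 : c₃ + ⟪g₃, a₃⟫ = 1) :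
    ⟪g₁, g₂⟫ / ‖g₂‖ ^ 2 =
        -(‖a₂ - a₃‖ ^ 2 + ‖a₃ - a₁‖ ^ 2 - ‖a₁ - a₂‖ ^ 2) / (2 * ‖a₃ - a₁‖ ^ 2) ∧
      ⟪g₁, g₃⟫ / ‖g₃‖ ^ 2 =
        -(‖a₂ - a₃‖ ^ 2 + ‖a₁ - a₂‖ ^ 2 - ‖a₃ - a₁‖ ^ 2) / (2 * ‖a₁ - a₂‖ ^ 2) := by
  have : Fact (finrank ℝ (EuclideanSpace ℝ (Fin 2)) = 2) := ⟨finrank_euclideanSpace_fin⟩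
  have edge {g p q : EuclideanSpace ℝ (Fin 2)} {c s t r : ℝ} (hp : c + ⟪g, p⟫ = s)
      (hq : c + ⟪g, q⟫ = t) (hr : t - s = r := by norm_num) : ⟪g, q - p⟫ = r := by
    rw [inner_sub_right]; linarith
  constructor
  · exact real_inner_div_norm_sq_of_barycentric_gradients
      (edge h11 h12) (edge h11 h13) (edge h21 h22) (edge h21 h23)
  · have h := real_inner_div_norm_sq_of_barycentric_gradients
      (edge h11 h13) (edge h11 h12) (edge h31 h33) (edge h31 h32)
    rwa [norm_sub_rev a₃ a₂, norm_sub_rev a₂ a₁, norm_sub_rev a₁ a₃] at h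

/-- Let `a₁, a₂, a₃ ∈ ℝ²` be affinely independent, with barycentric coordinates
`λ_i(x) = c_i + ⟪g_i, x⟫` (the affine functions with `λ_i(a_m) = δ_{im}`), and edge
lengths `ℓ₁ = ‖a₂ − a₃‖`, `ℓ₂ = ‖a₃ − a₁‖`, `ℓ₃ = ‖a₁ − a₂‖`. Then
`(∇λ₁·∇λ₂)/‖∇λ₂‖² = −(ℓ₁² + ℓ₂² − ℓ₃²)/(2ℓ₂²)` and
`(∇λ₁·∇λ₃)/‖∇λ₃‖² = −(ℓ₁² + ℓ₃² − ℓ₂²)/(2ℓ₃²)`. -/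
theorem barycentric_gradient_inner_formula
    (a₁ a₂ a₃ g₁ g₂ g₃ : EuclideanSpace ℝ (Fin 2)) (c₁ c₂ c₃ : ℝ)
    (hind : AffineIndependent ℝ ![a₁, a₂, a₃])
    (h11 : c₁ + ⟪g₁, a₁⟫ = 1) (h12 : c₁ + ⟪g₁, a₂⟫ = 0) (h13 : c₁ + ⟪g₁, a₃⟫ = 0)
    (h21 : c₂ + ⟪g₂, a₁⟫ = 0) (h22 : c₂ + ⟪g₂, a₂⟫ = 1) (h23 : c₂ + ⟪g₂, a₃⟫ = 0)
    (h31 : c₃ + ⟪g₃, a₁⟫ = 0) (h32 : c₃ + ⟪g₃, a₂⟫ = 0) (h33 : c₃ + ⟪g₃, a₃⟫ = 1) :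
    ⟪g₁, g₂⟫ / ‖g₂‖ ^ 2 =
        -(‖a₂ - a₃‖ ^ 2 + ‖a₃ - a₁‖ ^ 2 - ‖a₁ - a₂‖ ^ 2) / (2 * ‖a₃ - a₁‖ ^ 2) ∧
      ⟪g₁, g₃⟫ / ‖g₃‖ ^ 2 =
        -(‖a₂ - a₃‖ ^ 2 + ‖a₁ - a₂‖ ^ 2 - ‖a₃ - a₁‖ ^ 2) / (2 * ‖a₁ - a₂‖ ^ 2) :=
  barycentric_gradient_inner_formula_general a₁ a₂ a₃ g₁ g₂ g₃ c₁ c₂ c₃ h11 h12 h13 h21 h22 h23 h31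
    h32 h33
end

section
/- Let a₁, a₂, a₃ ∈ ℝ² be affinely independent, with barycentric coordinates λ₁, λ₂, λ₃ (the affine functions with λ_i(a_m) = δ_{im}), edge lengths ℓ₁ = ‖a₂ − a₃‖, ℓ₂ = ‖a₃ − a₁‖, ℓ₃ = ‖a₁ − a₂‖, and cubic bubble b_K = λ₁λ₂λ₃. Define φ₁ = λ₁(2λ₁ − 1) − 6b_K(2λ₁ − 1) + 6b_K [ ((∇λ₁·∇λ₂)/‖∇λ₂‖²)(2λ₂ − 1) + ((∇λ₁·∇λ₃)/‖∇λ₃‖²)(2λ₃ − 1) ], φ̃₁ = λ₁(2λ₁ − 1) + 6b_K(1 − λ₁), ψ̃₂ = 6b_K(2λ₂ − 1), ψ̃₃ = 6b_K(2λ₃ − 1), and set s₂ = (ℓ₃² − ℓ₁²)/(2ℓ₂), s₃ = (ℓ₁² − ℓ₂²)/(2ℓ₃). Then φ₁(x) = φ̃₁(x) + (s₂/ℓ₂) ψ̃₂(x) − (s₃/ℓ₃) ψ̃₃(x) for all x ∈ ℝ². -/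
open RealInnerProductSpace

/-!
In the plane, the gradient `g` of the barycentric coordinate of a vertex `q` is orthogonal to the
opposite edge `r - p` and satisfies `⟪g, q - r⟫ = 1`; since the orthogonal complement of an edge is
a line, `g / ‖g‖²` is the altitude vector from that edge to `q`. Hence `⟪∇λ₁, ∇λ_j⟫ / ‖∇λ_j‖²` is an
inner product of edge vectors, which the law of cosines turns into edge lengths. The same
one-dimensionality forces `∇λ₁ + ∇λ₂ + ∇λ₃ = 0`, so `λ₁ + λ₂ + λ₃ = 1`, and the identity becomes
polynomial arithmetic.
-/

namespace Barycentric

variable {E : Type*} [NormedAddCommGroup E] [InnerProductSpace ℝ E] [Fact (Module.finrank ℝ E = 2)]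

theorem eq_smul_of_inner_eq_zero {u v g w : E} (hv : v ≠ 0) (hgu : ⟪g, u⟫ = 1)
    (hgv : ⟪g, v⟫ = 0) (hwv : ⟪w, v⟫ = 0) : w = ⟪w, u⟫ • g := by
  have hg : g ≠ 0 := by rintro rfl; simp at hgu
  obtain ⟨t, rfl⟩ := Submodule.mem_span_singleton.mp <|
    Submodule.mem_span_singleton_of_inner_eq_zero_of_inner_eq_zero (𝕜 := ℝ) hv hg
      (by rwa [real_inner_comm]) (by rwa [real_inner_comm])
  rw [inner_smul_left, hgu, conj_trivial, mul_one]

theorem inv_norm_sq_smul_eq_altitude {u v g : E} (hv : v ≠ 0) (hgu : ⟪g, u⟫ = 1)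
    (hgv : ⟪g, v⟫ = 0) : (‖g‖ ^ 2)⁻¹ • g = u - (⟪u, v⟫ / ‖v‖ ^ 2) • v := by
  set w := u - (⟪u, v⟫ / ‖v‖ ^ 2) • v
  have hwv : ⟪w, v⟫ = 0 := by
    rw [inner_sub_left, inner_smul_left, real_inner_self_eq_norm_sq, conj_trivial,
      div_mul_cancel₀ _ (by positivity), sub_self]
  have hgw : ⟪g, w⟫ = 1 := by rw [inner_sub_right, inner_smul_right, hgu, hgv, mul_zero, sub_zero]
  have hw := eq_smul_of_inner_eq_zero hv hgu hgv hwv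
  rw [hw, inner_smul_right, real_inner_self_eq_norm_sq, mul_comm] at hgw
  rw [hw, ← eq_inv_of_mul_eq_one_right hgw]

theorem inner_div_norm_sq_eq {p q r g h : E} {c d : ℝ}
    (hgp : c + ⟪g, p⟫ = 0) (hgq : c + ⟪g, q⟫ = 1) (hgr : c + ⟪g, r⟫ = 0)
    (hhp : d + ⟪h, p⟫ = 1) (hhq : d + ⟪h, q⟫ = 0) (hhr : d + ⟪h, r⟫ = 0) :
    ⟪h, g⟫ / ‖g‖ ^ 2 = (‖q - p‖ ^ 2 - ‖q - r‖ ^ 2) / (2 * ‖p - r‖ ^ 2) - 1 / 2 := by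
  have hgu : ⟪g, q - r⟫ = 1 := by rw [inner_sub_right]; linarith
  have hgv : ⟪g, p - r⟫ = 0 := by rw [inner_sub_right]; linarith
  have hhu : ⟪h, q - r⟫ = 0 := by rw [inner_sub_right]; linarith
  have hhv : ⟪h, p - r⟫ = 1 := by rw [inner_sub_right]; linarith
  have hv : p - r ≠ 0 := by rintro hv; simp [hv] at hhv
  have hv' : ‖p - r‖ ≠ 0 := norm_ne_zero_iff.mpr hv
  have cosines := norm_sub_sq_real (q - r) (p - r)
  rw [sub_sub_sub_cancel_right] at cosines
  calc ⟪h, g⟫ / ‖g‖ ^ 2 = ⟪h, (‖g‖ ^ 2)⁻¹ • g⟫ := by rw [inner_smul_right, div_eq_inv_mul]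
    _ = -(⟪q - r, p - r⟫ / ‖p - r‖ ^ 2) := by
      rw [inv_norm_sq_smul_eq_altitude hv hgu hgv, inner_sub_right, inner_smul_right, hhu, hhv]
      ring
    _ = _ := by rw [cosines]; field_simp; ring

theorem add_add_eq_one {a₁ a₂ a₃ g₁ g₂ g₃ : E} {c₁ c₂ c₃ : ℝ}
    (h11 : c₁ + ⟪g₁, a₁⟫ = 1) (h12 : c₁ + ⟪g₁, a₂⟫ = 0) (h13 : c₁ + ⟪g₁, a₃⟫ = 0)
    (h21 : c₂ + ⟪g₂, a₁⟫ = 0) (h22 : c₂ + ⟪g₂, a₂⟫ = 1) (h23 : c₂ + ⟪g₂, a₃⟫ = 0)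
    (h31 : c₃ + ⟪g₃, a₁⟫ = 0) (h32 : c₃ + ⟪g₃, a₂⟫ = 0) (h33 : c₃ + ⟪g₃, a₃⟫ = 1) (x : E) :
    c₁ + ⟪g₁, x⟫ + (c₂ + ⟪g₂, x⟫) + (c₃ + ⟪g₃, x⟫) = 1 := by
  have hgu : ⟪g₂, a₂ - a₁⟫ = 1 := by rw [inner_sub_right]; linarith
  have hgv : ⟪g₂, a₃ - a₁⟫ = 0 := by rw [inner_sub_right]; linarith
  have hsum_u : ⟪g₁ + g₂ + g₃, a₂ - a₁⟫ = 0 := by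
    simp only [inner_add_left, inner_sub_right]; linarith
  have hsum_v : ⟪g₁ + g₂ + g₃, a₃ - a₁⟫ = 0 := by
    simp only [inner_add_left, inner_sub_right]; linarith
  have hv : a₃ - a₁ ≠ 0 := by
    rintro hv; rw [sub_eq_zero] at hv; rw [hv] at h33; linarith
  have hsum : g₁ + g₂ + g₃ = 0 := by
    rw [eq_smul_of_inner_eq_zero hv hgu hgv hsum_v, hsum_u, zero_smul]
  have hx : ⟪g₁ + g₂ + g₃, x - a₁⟫ = 0 := by rw [hsum, inner_zero_left]
  simp only [inner_add_left, inner_sub_right] at hx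
  linarith

end Barycentric

theorem ntw_basis_identity_general
    (a₁ a₂ a₃ g₁ g₂ g₃ : EuclideanSpace ℝ (Fin 2)) (c₁ c₂ c₃ : ℝ)
    (h11 : c₁ + ⟪g₁, a₁⟫ = 1) (h12 : c₁ + ⟪g₁, a₂⟫ = 0) (h13 : c₁ + ⟪g₁, a₃⟫ = 0)
    (h21 : c₂ + ⟪g₂, a₁⟫ = 0) (h22 : c₂ + ⟪g₂, a₂⟫ = 1) (h23 : c₂ + ⟪g₂, a₃⟫ = 0)
    (h31 : c₃ + ⟪g₃, a₁⟫ = 0) (h32 : c₃ + ⟪g₃, a₂⟫ = 0) (h33 : c₃ + ⟪g₃, a₃⟫ = 1) :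
    ∀ x : EuclideanSpace ℝ (Fin 2),
      let lam1 := c₁ + ⟪g₁, x⟫
      let lam2 := c₂ + ⟪g₂, x⟫
      let lam3 := c₃ + ⟪g₃, x⟫
      let bK := lam1 * lam2 * lam3
      let ℓ₁ := ‖a₂ - a₃‖
      let ℓ₂ := ‖a₃ - a₁‖
      let ℓ₃ := ‖a₁ - a₂‖
      let s₂ := (ℓ₃ ^ 2 - ℓ₁ ^ 2) / (2 * ℓ₂)
      let s₃ := (ℓ₁ ^ 2 - ℓ₂ ^ 2) / (2 * ℓ₃)
      let φ₁ := lam1 * (2 * lam1 - 1) - 6 * bK * (2 * lam1 - 1)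
        + 6 * bK * ((⟪g₁, g₂⟫ / ‖g₂‖ ^ 2) * (2 * lam2 - 1)
          + (⟪g₁, g₃⟫ / ‖g₃‖ ^ 2) * (2 * lam3 - 1))
      let φt₁ := lam1 * (2 * lam1 - 1) + 6 * bK * (1 - lam1)
      let ψt₂ := 6 * bK * (2 * lam2 - 1)
      let ψt₃ := 6 * bK * (2 * lam3 - 1)
      φ₁ = φt₁ + (s₂ / ℓ₂) * ψt₂ - (s₃ / ℓ₃) * ψt₃ := by
  have : Fact (Module.finrank ℝ (EuclideanSpace ℝ (Fin 2)) = 2) := ⟨finrank_euclideanSpace_fin⟩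
  intro x
  have ratio₂ := Barycentric.inner_div_norm_sq_eq h21 h22 h23 h11 h12 h13
  have ratio₃ := Barycentric.inner_div_norm_sq_eq h31 h33 h32 h11 h13 h12
  rw [norm_sub_rev a₂ a₁, norm_sub_rev a₁ a₃] at ratio₂
  rw [norm_sub_rev a₃ a₂] at ratio₃
  have hsum := Barycentric.add_add_eq_one h11 h12 h13 h21 h22 h23 h31 h32 h33 x
  dsimp only
  rw [ratio₂, ratio₃]
  linear_combination (-6 * ((c₁ + ⟪g₁, x⟫) * (c₂ + ⟪g₂, x⟫) * (c₃ + ⟪g₃, x⟫))) * hsum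

/-- Let `a₁, a₂, a₃ ∈ ℝ²` be affinely independent, with barycentric coordinates
`λ_i(x) = c_i + ⟪g_i, x⟫` (the affine functions with `λ_i(a_m) = δ_{im}`), edge lengths
`ℓ₁ = ‖a₂ − a₃‖`, `ℓ₂ = ‖a₃ − a₁‖`, `ℓ₃ = ‖a₁ − a₂‖`, and cubic bubble `b_K = λ₁λ₂λ₃`.
With `φ₁ = λ₁(2λ₁ − 1) − 6 b_K (2λ₁ − 1)
  + 6 b_K [ ((∇λ₁·∇λ₂)/‖∇λ₂‖²)(2λ₂ − 1) + ((∇λ₁·∇λ₃)/‖∇λ₃‖²)(2λ₃ − 1) ]`,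
`φ̃₁ = λ₁(2λ₁ − 1) + 6 b_K (1 − λ₁)`, `ψ̃₂ = 6 b_K (2λ₂ − 1)`, `ψ̃₃ = 6 b_K (2λ₃ − 1)`,
`s₂ = (ℓ₃² − ℓ₁²)/(2ℓ₂)` and `s₃ = (ℓ₁² − ℓ₂²)/(2ℓ₃)`, one has
`φ₁(x) = φ̃₁(x) + (s₂/ℓ₂) ψ̃₂(x) − (s₃/ℓ₃) ψ̃₃(x)` for all `x ∈ ℝ²`. -/
theorem ntw_basis_identity
    (a₁ a₂ a₃ g₁ g₂ g₃ : EuclideanSpace ℝ (Fin 2)) (c₁ c₂ c₃ : ℝ)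
    (hind : AffineIndependent ℝ ![a₁, a₂, a₃])
    (h11 : c₁ + ⟪g₁, a₁⟫ = 1) (h12 : c₁ + ⟪g₁, a₂⟫ = 0) (h13 : c₁ + ⟪g₁, a₃⟫ = 0)
    (h21 : c₂ + ⟪g₂, a₁⟫ = 0) (h22 : c₂ + ⟪g₂, a₂⟫ = 1) (h23 : c₂ + ⟪g₂, a₃⟫ = 0)
    (h31 : c₃ + ⟪g₃, a₁⟫ = 0) (h32 : c₃ + ⟪g₃, a₂⟫ = 0) (h33 : c₃ + ⟪g₃, a₃⟫ = 1) :
    ∀ x : EuclideanSpace ℝ (Fin 2),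
      let lam1 := c₁ + ⟪g₁, x⟫
      let lam2 := c₂ + ⟪g₂, x⟫
      let lam3 := c₃ + ⟪g₃, x⟫
      let bK := lam1 * lam2 * lam3
      let ℓ₁ := ‖a₂ - a₃‖
      let ℓ₂ := ‖a₃ - a₁‖
      let ℓ₃ := ‖a₁ - a₂‖
      let s₂ := (ℓ₃ ^ 2 - ℓ₁ ^ 2) / (2 * ℓ₂)
      let s₃ := (ℓ₁ ^ 2 - ℓ₂ ^ 2) / (2 * ℓ₃)
      let φ₁ := lam1 * (2 * lam1 - 1) - 6 * bK * (2 * lam1 - 1)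
        + 6 * bK * ((⟪g₁, g₂⟫ / ‖g₂‖ ^ 2) * (2 * lam2 - 1)
          + (⟪g₁, g₃⟫ / ‖g₃‖ ^ 2) * (2 * lam3 - 1))
      let φt₁ := lam1 * (2 * lam1 - 1) + 6 * bK * (1 - lam1)
      let ψt₂ := 6 * bK * (2 * lam2 - 1)
      let ψt₃ := 6 * bK * (2 * lam3 - 1)
      φ₁ = φt₁ + (s₂ / ℓ₂) * ψt₂ - (s₃ / ℓ₃) * ψt₃ :=
  ntw_basis_identity_general a₁ a₂ a₃ g₁ g₂ g₃ c₁ c₂ c₃ h11 h12 h13 h21 h22 h23 h31 h32 h33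
end
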